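/- arXiv:1704.01657 — 2 statements merged into one kernel-verified Lean document; each statement's English description precedes it below -/
import Mathlib

section
/- For every integer pair (s,t) with s ≥ 0, t ≥ 0 and s+t ≥ 2, either (s,t) = (1,1), or the polynomial q(x) = (2−x)^s x^t − 1 has a complex root x₀ with x₀ ≠ 0 and x₀ ≠ 1. -/
/-!
If `1` were the only root of `q = (2 - x)^s x^t - 1`, then `q = c (x - 1)^(s + t)`, whose derivative
vanishes nowhere but at `1`. Yet `q + 1` has a double root at `0` when `t ≥ 2` and at `2` when
`s ≥ 2`, so `q'` vanishes there. Finally `0` is never a root of `q`.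
-/

open Polynomial

theorem Polynomial.isRoot_derivative_of_sq_dvd {R : Type*} [CommRing R] {p : R[X]} {a : R}
    (h : (X - C a) ^ 2 ∣ p) : p.derivative.IsRoot a :=
  dvd_iff_isRoot.mp (by simpa using pow_sub_one_dvd_derivative_of_pow_dvd h)

theorem Polynomial.exists_isRoot_ne_of_isRoot_derivative {K : Type*} [Field K] [IsAlgClosed K]
    [CharZero K] {p : K[X]} (hp : 0 < p.natDegree) {a x : K} (hxa : x ≠ a)
    (hx : p.derivative.IsRoot x) : ∃ y, p.IsRoot y ∧ y ≠ a := by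
  by_contra! h
  have hroots : p.roots = Multiset.replicate p.natDegree a :=
    Multiset.eq_replicate.mpr
      ⟨IsAlgClosed.card_roots_eq_natDegree, fun y hy => h y (isRoot_of_mem_roots hy)⟩
  have hp_eq : p = C p.leadingCoeff * (X - C a) ^ p.natDegree := by
    have := C_leadingCoeff_mul_prod_multiset_X_sub_C (p := p) IsAlgClosed.card_roots_eq_natDegree
    rwa [hroots, Multiset.map_replicate, Multiset.prod_replicate, eq_comm] at this
  have hlc : p.leadingCoeff ≠ 0 := leadingCoeff_ne_zero.mpr (ne_zero_of_natDegree_gt hp)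
  rw [hp_eq, derivative_C_mul, derivative_X_sub_C_pow] at hx
  simp [IsRoot, hlc, hp.ne', sub_ne_zero.mpr hxa] at hx

noncomputable def q {R : Type*} [CommRing R] (s t : ℕ) : R[X] := (2 - X) ^ s * X ^ t - 1

section

variable {R : Type*} [CommRing R] (s t : ℕ)

@[simp]
lemma eval_q (x : R) : (q s t).eval x = (2 - x) ^ s * x ^ t - 1 := by
  simp [q]

lemma natDegree_q [Nontrivial R] : (q s t : R[X]).natDegree = s + t := by
  by_cases h : s = 0 ∧ t = 0
  · simp [q, h.1, h.2]
  · unfold q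
    compute_degree!
    simpa [h] using ((isUnit_neg_one (α := R)).pow s).ne_zero

variable {s t}

lemma not_isRoot_q_zero [CharZero R] (hst : s + t ≠ 0) : ¬(q s t : R[X]).IsRoot 0 := by
  intro h
  rcases Nat.eq_zero_or_pos t with rfl | ht
  · have h2 : ((2 ^ s : ℕ) : R) = 1 := by push_cast; simpa [sub_eq_zero] using h
    rw [Nat.cast_eq_one, Nat.pow_eq_one] at h2
    omega
  · simp [zero_pow ht.ne'] at h

lemma isRoot_derivative_q_zero (ht : 2 ≤ t) : (q s t : R[X]).derivative.IsRoot 0 := by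
  rw [q, derivative_sub, derivative_one, sub_zero]
  refine isRoot_derivative_of_sq_dvd (Dvd.dvd.mul_left ?_ _)
  simpa using pow_dvd_pow X ht

lemma isRoot_derivative_q_two (hs : 2 ≤ s) : (q s t : R[X]).derivative.IsRoot 2 := by
  rw [q, derivative_sub, derivative_one, sub_zero]
  refine isRoot_derivative_of_sq_dvd (Dvd.dvd.mul_right ?_ _)
  have : (X - C 2 : R[X]) ∣ 2 - X := ⟨-1, by rw [C_ofNat]; ring⟩
  exact (pow_dvd_pow_of_dvd this 2).trans (pow_dvd_pow _ hs)

end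

theorem exists_nontrivial_root_q (s t : ℕ) (hst : 2 ≤ s + t) :
    (s = 1 ∧ t = 1) ∨
    ∃ x₀ : ℂ, (2 - x₀) ^ s * x₀ ^ t - 1 = 0 ∧ x₀ ≠ 0 ∧ x₀ ≠ 1 := by
  by_cases h11 : s = 1 ∧ t = 1
  · exact Or.inl h11
  right
  obtain ⟨c, hc1, hc⟩ : ∃ c : ℂ, c ≠ 1 ∧ (q s t : ℂ[X]).derivative.IsRoot c := by
    rcases le_or_gt 2 t with ht | ht
    · exact ⟨0, zero_ne_one, isRoot_derivative_q_zero ht⟩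
    · exact ⟨2, by norm_num, isRoot_derivative_q_two (by omega)⟩
  obtain ⟨x₀, hx₀, hx₀1⟩ :=
    exists_isRoot_ne_of_isRoot_derivative (by rw [natDegree_q]; omega) hc1 hc
  refine ⟨x₀, by simpa using hx₀, ?_, hx₀1⟩
  rintro rfl
  exact not_isRoot_q_zero (by omega) hx₀
end

section
/- Let t be a primitive n-th root of unity with n ≥ 5, and let φ be a Möbius transformation. If |φ(t^i)| ∈ {0, 1} ∪ {∞} for all 1 ≤ i ≤ 5 (interpreting φ(z) = ∞ when the denominator vanishes), then φ maps the unit circle onto the unit circle. -/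
/-!
On the unit circle `z̄ = 1 / z`, so `z (|a z + b|² - |c z + d|²)` is the quadratic
`α z² + β z + ᾱ` with `α = a b̄ - c d̄` and `β = |a|² + |b|² - |c|² - |d|²`. As `ad - bc ≠ 0`, at most
one of the five distinct points `t, …, t⁵` is a zero of `a z + b` and at most one of `c z + d`, so
the quadratic has three roots and `α = β = 0`; conversely `α = β = 0` gives `|a z + b| = |c z + d|`
on the whole circle. For surjectivity, the inverse map `w ↦ (d w - b) / (-c w + a)` satisfies the
same two relations, since `|ad - bc|² = (|a|² - |c|²)²` forces `|a| = |d|`.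
-/

open Complex ComplexConjugate Finset

section IsDomain

variable {R : Type*} [CommRing R]

theorem det_eq_zero_of_mul_add_eq_zero {a b c d z : R}
    (hab : a * z + b = 0) (hcd : c * z + d = 0) : a * d - b * c = 0 := by
  linear_combination a * hcd - c * hab

variable [IsDomain R]

theorem quadratic_coeffs_eq_zero_of_three_roots {p q r x y z : R}
    (hxy : x ≠ y) (hxz : x ≠ z) (hyz : y ≠ z) (hx : p * x ^ 2 + q * x + r = 0)
    (hy : p * y ^ 2 + q * y + r = 0) (hz : p * z ^ 2 + q * z + r = 0) :
    p = 0 ∧ q = 0 ∧ r = 0 := by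
  have hxy' : p * (x + y) + q = 0 :=
    mul_left_cancel₀ (sub_ne_zero.mpr hxy) (by linear_combination hx - hy)
  have hxz' : p * (x + z) + q = 0 :=
    mul_left_cancel₀ (sub_ne_zero.mpr hxz) (by linear_combination hx - hz)
  have hp : p = 0 := mul_left_cancel₀ (sub_ne_zero.mpr hyz) (by linear_combination hxy' - hxz')
  have hq : q = 0 := by linear_combination hxy' - (x + y) * hp
  exact ⟨hp, hq, by linear_combination hx - x ^ 2 * hp - x * hq⟩

theorem card_filter_mul_add_eq_zero_le_one [DecidableEq R] {a b : R}
    (hab : a ≠ 0 ∨ b ≠ 0) (s : Finset R) : #(s.filter (fun z => a * z + b = 0)) ≤ 1 := by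
  refine card_le_one.mpr fun x hx y hy => ?_
  simp only [mem_filter] at hx hy
  by_contra hxy
  have ha : a = 0 :=
    (mul_eq_zero.mp (by linear_combination hx.2 - hy.2 : a * (x - y) = 0)).resolve_right
      (sub_ne_zero.mpr hxy)
  exact hab.elim (· ha) (· (by linear_combination hx.2 - x * ha))

end IsDomain

theorem moebius_apply_inverse {K : Type*} [Field K] {a b c d w : K} (hM : a * d - b * c ≠ 0)
    (hw : -c * w + a ≠ 0) :
    (a * ((d * w + -b) / (-c * w + a)) + b) / (c * ((d * w + -b) / (-c * w + a)) + d) = w := by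
  have hnum : a * ((d * w + -b) / (-c * w + a)) + b = (a * d - b * c) * w / (-c * w + a) := by
    rw [eq_div_iff hw, add_mul, mul_assoc, div_mul_cancel₀ _ hw]; ring
  have hden : c * ((d * w + -b) / (-c * w + a)) + d = (a * d - b * c) / (-c * w + a) := by
    rw [eq_div_iff hw, add_mul, mul_assoc, div_mul_cancel₀ _ hw]; ring
  rw [hnum, hden, div_div_div_cancel_right₀ hw, mul_div_cancel_left₀ _ hM]

namespace Complex

variable {a b c d z : ℂ}

theorem norm_mul_add_eq_norm_mul_add_iff (hz : ‖z‖ = 1) :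
    ‖a * z + b‖ = ‖c * z + d‖ ↔
      (a * conj b - c * conj d) * z ^ 2 + (‖a‖ ^ 2 + ‖b‖ ^ 2 - ‖c‖ ^ 2 - ‖d‖ ^ 2 : ℝ) * z
        + conj (a * conj b - c * conj d) = 0 := by
  have hzz : z * conj z = 1 := by rw [mul_conj', hz]; norm_num
  have hz0 : z ≠ 0 := by rintro rfl; simp at hz
  have key : ((‖a * z + b‖ ^ 2 - ‖c * z + d‖ ^ 2 : ℝ) : ℂ) * z =
      (a * conj b - c * conj d) * z ^ 2 + (‖a‖ ^ 2 + ‖b‖ ^ 2 - ‖c‖ ^ 2 - ‖d‖ ^ 2 : ℝ) * z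
        + conj (a * conj b - c * conj d) := by
    push_cast
    simp only [← mul_conj', map_add, map_sub, map_mul, conj_conj]
    linear_combination (a * conj a * z - c * conj c * z + conj a * b - conj c * d) * hzz
  rw [← key, mul_eq_zero, or_iff_left hz0, ofReal_eq_zero, sub_eq_zero,
    sq_eq_sq₀ (norm_nonneg _) (norm_nonneg _)]

theorem norm_mul_add_eq_of_coeffs (hα : a * conj b = c * conj d)
    (hβ : ‖a‖ ^ 2 + ‖b‖ ^ 2 = ‖c‖ ^ 2 + ‖d‖ ^ 2) (hz : ‖z‖ = 1) : ‖a * z + b‖ = ‖c * z + d‖ := by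
  rw [norm_mul_add_eq_norm_mul_add_iff hz, sub_eq_zero.mpr hα,
    show ‖a‖ ^ 2 + ‖b‖ ^ 2 - ‖c‖ ^ 2 - ‖d‖ ^ 2 = 0 by linarith]
  simp

theorem mul_add_ne_zero_of_coeffs (hM : a * d - b * c ≠ 0) (hα : a * conj b = c * conj d)
    (hβ : ‖a‖ ^ 2 + ‖b‖ ^ 2 = ‖c‖ ^ 2 + ‖d‖ ^ 2) (hz : ‖z‖ = 1) : c * z + d ≠ 0 := by
  intro hcd
  have hab : a * z + b = 0 := by
    rw [← norm_eq_zero, norm_mul_add_eq_of_coeffs hα hβ hz, hcd, norm_zero]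
  exact hM (det_eq_zero_of_mul_add_eq_zero hab hcd)

theorem norm_moebius_eq_one (hM : a * d - b * c ≠ 0) (hα : a * conj b = c * conj d)
    (hβ : ‖a‖ ^ 2 + ‖b‖ ^ 2 = ‖c‖ ^ 2 + ‖d‖ ^ 2) (hz : ‖z‖ = 1) :
    ‖(a * z + b) / (c * z + d)‖ = 1 := by
  rw [norm_div, norm_mul_add_eq_of_coeffs hα hβ hz,
    div_self (norm_ne_zero_iff.mpr (mul_add_ne_zero_of_coeffs hM hα hβ hz))]

theorem norm_det_sq_eq_of_coeffs (hα : a * conj b = c * conj d)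
    (hβ : ‖a‖ ^ 2 + ‖b‖ ^ 2 = ‖c‖ ^ 2 + ‖d‖ ^ 2) :
    ‖a * d - b * c‖ ^ 2 = (‖a‖ ^ 2 - ‖c‖ ^ 2) ^ 2 := by
  have hβ' : a * conj a + b * conj b = c * conj c + d * conj d := by
    simp only [mul_conj']; exact_mod_cast hβ
  have key : (a * d - b * c) * conj (a * d - b * c) = (a * conj a - c * conj c) ^ 2 := by
    simp only [map_sub, map_mul]
    linear_combination (conj a * b - d * conj c) * hα + (c * conj c - a * conj a) * hβ'
  simp only [mul_conj'] at key
  exact_mod_cast key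

theorem norm_sq_eq_norm_sq_of_coeffs (hM : a * d - b * c ≠ 0) (hα : a * conj b = c * conj d)
    (hβ : ‖a‖ ^ 2 + ‖b‖ ^ 2 = ‖c‖ ^ 2 + ‖d‖ ^ 2) : ‖a‖ ^ 2 = ‖d‖ ^ 2 := by
  have hprod : ‖a‖ ^ 2 * ‖b‖ ^ 2 = ‖c‖ ^ 2 * ‖d‖ ^ 2 := by
    rw [← mul_pow, ← mul_pow, ← norm_conj b, ← norm_conj d, ← norm_mul, ← norm_mul, hα]
  have hac : ‖a‖ ^ 2 - ‖c‖ ^ 2 ≠ 0 := by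
    intro h0
    exact hM (by simpa [h0] using norm_det_sq_eq_of_coeffs hα hβ)
  refine sub_eq_zero.mp (mul_left_cancel₀ hac ?_)
  linear_combination ‖a‖ ^ 2 * hβ - hprod

theorem mul_conj_eq_of_coeffs (hM : a * d - b * c ≠ 0) (hα : a * conj b = c * conj d)
    (hβ : ‖a‖ ^ 2 + ‖b‖ ^ 2 = ‖c‖ ^ 2 + ‖d‖ ^ 2) : d * conj b = c * conj a := by
  have hα' : conj a * b = conj c * d := by simpa using congrArg conj hα
  have hβ' : a * conj a + b * conj b = c * conj c + d * conj d := by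
    simp only [mul_conj']; exact_mod_cast hβ
  refine mul_right_cancel₀ ((map_ne_zero conj).mpr hM) ?_
  simp only [map_sub, map_mul]
  -- the difference of the two sides is `ā b̄ (|c|² + |d|² - |a|² - |b|²)`
  linear_combination (conj b) ^ 2 * hα' + (conj a) ^ 2 * hα - conj a * conj b * hβ'

theorem image_moebius_unitCircle (hM : a * d - b * c ≠ 0) (hα : a * conj b = c * conj d)
    (hβ : ‖a‖ ^ 2 + ‖b‖ ^ 2 = ‖c‖ ^ 2 + ‖d‖ ^ 2) :
    (fun z : ℂ => (a * z + b) / (c * z + d)) '' {z : ℂ | ‖z‖ = 1} = {z : ℂ | ‖z‖ = 1} := by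
  refine Set.Subset.antisymm (Set.image_subset_iff.mpr fun z hz => norm_moebius_eq_one hM hα hβ hz)
    fun w hw => ?_
  have hM' : d * a - -b * -c ≠ 0 := by contrapose! hM; linear_combination hM
  have hα' : d * conj (-b) = -c * conj a := by
    rw [map_neg, mul_neg, neg_mul, mul_conj_eq_of_coeffs hM hα hβ]
  have hβ' : ‖d‖ ^ 2 + ‖-b‖ ^ 2 = ‖-c‖ ^ 2 + ‖a‖ ^ 2 := by
    rw [norm_neg, norm_neg]; linarith [norm_sq_eq_norm_sq_of_coeffs hM hα hβ]
  exact ⟨_, norm_moebius_eq_one hM' hα' hβ' hw,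
    moebius_apply_inverse hM (mul_add_ne_zero_of_coeffs hM' hα' hβ' hw)⟩

theorem mul_conj_eq_and_norm_sq_eq_of_two_lt_card {s : Finset ℂ} (hs : 2 < #s)
    (h : ∀ z ∈ s, ‖z‖ = 1 ∧ ‖a * z + b‖ = ‖c * z + d‖) :
    a * conj b = c * conj d ∧ ‖a‖ ^ 2 + ‖b‖ ^ 2 = ‖c‖ ^ 2 + ‖d‖ ^ 2 := by
  obtain ⟨x, hx, y, hy, z, hz, hxy, hxz, hyz⟩ := two_lt_card.mp hs
  have root (w) (hw : w ∈ s) := (norm_mul_add_eq_norm_mul_add_iff (h w hw).1).mp (h w hw).2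
  obtain ⟨hp, hq, -⟩ := quadratic_coeffs_eq_zero_of_three_roots hxy hxz hyz
    (root x hx) (root y hy) (root z hz)
  exact ⟨sub_eq_zero.mp hp, by linarith [ofReal_eq_zero.mp hq]⟩

theorem two_lt_card_filter_norm_eq (hM : a * d - b * c ≠ 0) {s : Finset ℂ} (hs : 5 ≤ #s)
    (h : ∀ z ∈ s, a * z + b = 0 ∨ c * z + d = 0 ∨ ‖(a * z + b) / (c * z + d)‖ = 1) :
    2 < #(s.filter fun z => ‖a * z + b‖ = ‖c * z + d‖) := by
  have hbad : s.filter (fun z => ¬‖a * z + b‖ = ‖c * z + d‖) ⊆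
      s.filter (fun z => a * z + b = 0) ∪ s.filter (fun z => c * z + d = 0) := by
    intro z hz
    rw [mem_filter] at hz
    rcases h z hz.1 with h0 | h0 | h1
    · simp [hz.1, h0]
    · simp [hz.1, h0]
    · have hcd : c * z + d ≠ 0 := by rintro h0; simp [h0] at h1
      rw [norm_div, div_eq_one_iff_eq (norm_ne_zero_iff.mpr hcd)] at h1
      exact absurd h1 hz.2
  have hab : a ≠ 0 ∨ b ≠ 0 := by contrapose! hM; simp [hM]
  have hcd : c ≠ 0 ∨ d ≠ 0 := by contrapose! hM; simp [hM]
  have := (card_le_card hbad).trans (card_union_le _ _)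
  have := card_filter_mul_add_eq_zero_le_one hab s
  have := card_filter_mul_add_eq_zero_le_one hcd s
  have := card_filter_add_card_filter_not (fun z => ‖a * z + b‖ = ‖c * z + d‖) (s := s)
  omega

end Complex

theorem moebius_of_five_roots_maps_circle (n : ℕ) (hn : 5 ≤ n) (t : ℂ)
    (ht : t ^ n = 1) (hprim : ∀ k : ℕ, 0 < k → k < n → t ^ k ≠ 1)
    (a b c d : ℂ) (hM : a * d - b * c ≠ 0)
    (h : ∀ i : ℕ, 1 ≤ i → i ≤ 5 →
      a * t ^ i + b = 0 ∨ c * t ^ i + d = 0 ∨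
        ‖(a * t ^ i + b) / (c * t ^ i + d)‖ = 1) :
    (fun z : ℂ => (a * z + b) / (c * z + d)) '' {z : ℂ | ‖z‖ = 1}
      = {z : ℂ | ‖z‖ = 1} := by
  have hζ : IsPrimitiveRoot t n := .mk_of_lt t (by omega) ht hprim
  have ht0 : t ≠ 0 := hζ.ne_zero (by omega)
  set s := (range 5).image (t ^ · * t)
  have hs : #s = 5 := by
    refine card_image_of_injOn ((hζ.injOn_pow_mul ht0).mono ?_)
    simpa using range_subset_range.mpr hn
  have hs_circle : ∀ z ∈ s, ‖z‖ = 1 := by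
    simp [s, norm_eq_one_of_pow_eq_one ht (by omega)]
  have hs_h : ∀ z ∈ s, a * z + b = 0 ∨ c * z + d = 0 ∨ ‖(a * z + b) / (c * z + d)‖ = 1 := by
    simp only [s, mem_image, mem_range, ← pow_succ]
    rintro _ ⟨i, hi, rfl⟩
    exact h (i + 1) (by omega) (by omega)
  obtain ⟨hα, hβ⟩ :=
    mul_conj_eq_and_norm_sq_eq_of_two_lt_card (two_lt_card_filter_norm_eq hM hs.ge hs_h)
    fun z hz => ⟨hs_circle z (mem_filter.mp hz).1, (mem_filter.mp hz).2⟩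
  exact image_moebius_unitCircle hM hα hβ
end
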